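/- arXiv:0809.2206 — 3 statements merged into one kernel-verified Lean document; each statement's English description precedes it below -/
import Mathlib

section
/- For every fixed a ∈ A, the map [0,∞) → A defined by ħ ↦ S_ħ(a) for ħ > 0 and 0 ↦ a (i.e. S_0 = id) is continuous with respect to the norm of A. -/
open MeasureTheory Matrix Topology Filter

noncomputable section

variable {d : ℕ} {A : Type*} [NormedRing A] [StarRing A] [CStarRing A]
  [NormedAlgebra ℂ A] [StarModule ℂ A] [CompleteSpace A]

/-- The operator `S_hb(a) = ∫ (√(det G)/(π·hb)^{d/2}) e^{−g(u,u)/hb} α_u(a) du`. -/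
def Sop (α : (Fin d → ℝ) → A →ₗ[ℂ] A) (G : Matrix (Fin d) (Fin d) ℝ) (hb : ℝ) (a : A) : A :=
  ∫ u : Fin d → ℝ,
    (Real.sqrt G.det / (Real.pi * hb) ^ ((d : ℝ) / 2) * Real.exp (-(u ⬝ᵥ (G *ᵥ u)) / hb)) • α u a

/-!
Substituting `u = √ħ • v` turns `S_ħ(a)` into `∫ ρ(v) • α_{√ħ v}(a) dv`, where `ρ` is the
normalized Gaussian density of `G`. This expression makes sense for every `ħ ≥ 0`, is continuous
in `ħ` by dominated convergence (as `‖α_u(a)‖ = ‖a‖`), and equals `a` at `ħ = 0` because `ρ` has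
total mass one.
-/

section ChangeOfVariables

variable {ι E : Type*} [Fintype ι] [DecidableEq ι] [NormedAddCommGroup E]

lemma measurableEmbedding_mulVec {M : Matrix ι ι ℝ} (hM : M.det ≠ 0) :
    MeasurableEmbedding (M *ᵥ ·) :=
  ((toLin' M).equivOfDetNeZero (by rwa [LinearMap.det_toLin'])).toContinuousLinearEquiv
    |>.toHomeomorph.measurableEmbedding

lemma map_mulVec_volume {M : Matrix ι ι ℝ} (hM : M.det ≠ 0) :
    Measure.map (M *ᵥ ·) volume = ENNReal.ofReal |M.det|⁻¹ • volume := by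
  rw [← abs_inv, ← Real.map_matrix_volume_pi_eq_smul_volume_pi hM]
  rfl

lemma integral_comp_mulVec [NormedSpace ℝ E] {M : Matrix ι ι ℝ} (hM : M.det ≠ 0)
    (f : (ι → ℝ) → E) : ∫ v, f (M *ᵥ v) = |M.det|⁻¹ • ∫ w, f w := by
  rw [← (measurableEmbedding_mulVec hM).integral_map, map_mulVec_volume hM,
    integral_smul_measure, ENNReal.toReal_ofReal (by positivity)]

lemma MeasureTheory.Integrable.comp_mulVec {M : Matrix ι ι ℝ} (hM : M.det ≠ 0)
    {f : (ι → ℝ) → E} (hf : Integrable f) : Integrable fun v => f (M *ᵥ v) := by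
  rw [← Function.comp_def, ← (measurableEmbedding_mulVec hM).integrable_map_iff,
    map_mulVec_volume hM]
  exact hf.smul_measure ENNReal.ofReal_ne_top

end ChangeOfVariables

section Gaussian

open Real

variable {ι : Type*} [Fintype ι]

lemma exp_neg_dotProduct_self (w : ι → ℝ) : exp (-(w ⬝ᵥ w)) = ∏ i, exp (-1 * w i ^ 2) := by
  simp only [← exp_sum, dotProduct, neg_one_mul, Finset.sum_neg_distrib, sq]

lemma integrable_exp_neg_dotProduct_self : Integrable fun w : ι → ℝ => exp (-(w ⬝ᵥ w)) := by
  simp_rw [exp_neg_dotProduct_self]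
  exact Integrable.fintype_prod (f := fun _ x => exp (-1 * x ^ 2))
    fun _ => integrable_exp_neg_mul_sq one_pos

lemma integral_exp_neg_dotProduct_self :
    ∫ w : ι → ℝ, exp (-(w ⬝ᵥ w)) = π ^ ((Fintype.card ι : ℝ) / 2) := by
  simp_rw [exp_neg_dotProduct_self]
  rw [volume_pi, integral_fintype_prod_eq_pow (ι := ι) (fun x : ℝ => exp (-1 * x ^ 2)),
    integral_gaussian, div_one, sqrt_eq_rpow, ← rpow_natCast, ← rpow_mul pi_pos.le]
  ring_nf

open scoped MatrixOrder in
lemma Matrix.PosDef.exists_dotProduct_mulVec_eq [DecidableEq ι] {G : Matrix ι ι ℝ}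
    (hG : G.PosDef) : ∃ B : Matrix ι ι ℝ, B.det ≠ 0 ∧ |B.det| = √G.det ∧
      ∀ v, v ⬝ᵥ G *ᵥ v = (B *ᵥ v) ⬝ᵥ (B *ᵥ v) := by
  obtain ⟨B, rfl⟩ := CStarAlgebra.nonneg_iff_eq_star_mul_self.mp hG.posSemidef.nonneg
  have hdet : (star B * B).det = B.det ^ 2 := by
    rw [det_mul, star_eq_conjTranspose, det_conjTranspose, star_trivial, sq]
  have hB0 : B.det ≠ 0 := fun h => by simpa [hdet, h] using hG.det_pos
  refine ⟨B, hB0, by rw [hdet, sqrt_sq_eq_abs], fun v => ?_⟩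
  rw [← mulVec_mulVec, dotProduct_mulVec, star_eq_conjTranspose,
    conjTranspose_eq_transpose_of_trivial, vecMul_transpose]

namespace Matrix.PosDef

variable [DecidableEq ι] {G : Matrix ι ι ℝ}

lemma integrable_exp_neg_dotProduct_mulVec (hG : G.PosDef) :
    Integrable fun v : ι → ℝ => exp (-(v ⬝ᵥ G *ᵥ v)) := by
  obtain ⟨B, hB0, -, hGB⟩ := hG.exists_dotProduct_mulVec_eq
  simp_rw [hGB]
  exact integrable_exp_neg_dotProduct_self.comp_mulVec hB0

lemma integral_exp_neg_dotProduct_mulVec (hG : G.PosDef) :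
    ∫ v : ι → ℝ, exp (-(v ⬝ᵥ G *ᵥ v)) = π ^ ((Fintype.card ι : ℝ) / 2) / √G.det := by
  obtain ⟨B, hB0, hB, hGB⟩ := hG.exists_dotProduct_mulVec_eq
  simp_rw [hGB]
  rw [integral_comp_mulVec hB0 fun w => exp (-(w ⬝ᵥ w)), integral_exp_neg_dotProduct_self, hB,
    smul_eq_mul, inv_mul_eq_div]

end Matrix.PosDef

variable [DecidableEq ι]

def gaussianDensity (G : Matrix ι ι ℝ) (v : ι → ℝ) : ℝ :=
  √G.det / π ^ ((Fintype.card ι : ℝ) / 2) * exp (-(v ⬝ᵥ G *ᵥ v))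

variable {G : Matrix ι ι ℝ}

lemma integrable_gaussianDensity (hG : G.PosDef) : Integrable (gaussianDensity G) :=
  hG.integrable_exp_neg_dotProduct_mulVec.const_mul _

lemma integral_gaussianDensity (hG : G.PosDef) : ∫ v, gaussianDensity G v = 1 := by
  have : √G.det ≠ 0 := (sqrt_pos.mpr hG.det_pos).ne'
  have : π ^ ((Fintype.card ι : ℝ) / 2) ≠ 0 := (rpow_pos_of_pos pi_pos _).ne'
  unfold gaussianDensity
  rw [integral_const_mul, hG.integral_exp_neg_dotProduct_mulVec]
  field_simp

end Gaussian

section HeatKernel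

open Real

variable {ι : Type*} [Fintype ι] [DecidableEq ι]

def heatKernel (G : Matrix ι ι ℝ) (t : ℝ) (u : ι → ℝ) : ℝ :=
  √G.det / (π * t) ^ ((Fintype.card ι : ℝ) / 2) * exp (-(u ⬝ᵥ G *ᵥ u) / t)

lemma sqrt_pow_mul_heatKernel_sqrt_smul (G : Matrix ι ι ℝ) {t : ℝ} (ht : 0 < t) (v : ι → ℝ) :
    √t ^ Fintype.card ι * heatKernel G t (√t • v) = gaussianDensity G v := by
  have hpow : √t ^ Fintype.card ι = t ^ ((Fintype.card ι : ℝ) / 2) := by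
    rw [sqrt_eq_rpow, ← rpow_natCast, ← rpow_mul ht.le]
    ring_nf
  have hquad : (√t • v) ⬝ᵥ G *ᵥ (√t • v) = t * (v ⬝ᵥ G *ᵥ v) := by
    rw [mulVec_smul, smul_dotProduct, dotProduct_smul, smul_eq_mul, smul_eq_mul, ← mul_assoc,
      mul_self_sqrt ht.le]
  have : t ^ ((Fintype.card ι : ℝ) / 2) ≠ 0 := (rpow_pos_of_pos ht _).ne'
  rw [heatKernel, hpow, hquad, mul_rpow pi_pos.le ht.le, neg_div, mul_div_cancel_left₀ _ ht.ne',
    gaussianDensity]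
  field_simp

lemma integral_heatKernel_smul_eq_integral_gaussianDensity_smul {E : Type*}
    [NormedAddCommGroup E] [NormedSpace ℝ E] (G : Matrix ι ι ℝ) {t : ℝ} (ht : 0 < t)
    (f : (ι → ℝ) → E) :
    ∫ u, heatKernel G t u • f u = ∫ v, gaussianDensity G v • f (√t • v) := by
  have hR : √t ^ Fintype.card ι ≠ 0 := pow_ne_zero _ (sqrt_pos.mpr ht).ne'
  rw [← one_smul ℝ (∫ u, _), ← mul_inv_cancel₀ hR, mul_smul,
    ← Module.finrank_fintype_fun_eq_card (R := ℝ),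
    ← Measure.integral_comp_smul_of_nonneg _ _ (hR := sqrt_nonneg t),
    Module.finrank_fintype_fun_eq_card (R := ℝ), ← integral_smul]
  simp_rw [smul_smul, sqrt_pow_mul_heatKernel_sqrt_smul G ht]

end HeatKernel

lemma continuous_integral_smul_comp_smul {E F : Type*} [NormedAddCommGroup E] [NormedSpace ℝ E]
    [MeasurableSpace E] [OpensMeasurableSpace E] [SecondCountableTopology E]
    [NormedAddCommGroup F] [NormedSpace ℝ F] {μ : Measure E} {ρ : E → ℝ} (hρ : Integrable ρ μ)
    {f : E → F} (hf : Continuous f) {C : ℝ} (hC : ∀ x, ‖f x‖ ≤ C) :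
    Continuous fun t : ℝ => ∫ v, ρ v • f (t • v) ∂μ := by
  refine continuous_of_dominated (bound := fun v => ‖ρ v‖ * C)
    (fun t => hρ.aestronglyMeasurable.smul
      (hf.comp (continuous_const_smul t)).aestronglyMeasurable)
    (fun t => ae_of_all _ fun v => ?_) (hρ.norm.mul_const C)
    (ae_of_all _ fun v => continuous_const.smul (hf.comp (continuous_id.smul continuous_const)))
  rw [norm_smul]
  exact mul_le_mul_of_nonneg_left (hC _) (norm_nonneg _)

theorem statement4_general
    (α : (Fin d → ℝ) → A →ₗ[ℂ] A)
    (hiso : ∀ u (a : A), ‖α u a‖ = ‖a‖)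
    (h0 : ∀ a : A, α 0 a = a)
    (hcont : ∀ a : A, Continuous fun u => α u a)
    (G : Matrix (Fin d) (Fin d) ℝ) (hG : G.PosDef)
    (a : A) :
    ContinuousOn (fun hb : ℝ => if 0 < hb then Sop α G hb a else a) (Set.Ici (0 : ℝ)) := by
  have hSop : ∀ t, 0 < t → Sop α G t a = ∫ v, gaussianDensity G v • α (√t • v) a := fun t ht => by
    simpa only [Sop, heatKernel, Fintype.card_fin] using
      integral_heatKernel_smul_eq_integral_gaussianDensity_smul G ht fun u => α u a
  have hsmoothed : Continuous fun t => ∫ v, gaussianDensity G v • α (√t • v) a :=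
    (continuous_integral_smul_comp_smul (integrable_gaussianDensity hG) (hcont a)
      fun u => (hiso u a).le).comp Real.continuous_sqrt
  refine hsmoothed.continuousOn.congr fun t ht => ?_
  rcases (Set.mem_Ici.mp ht).lt_or_eq with ht | rfl
  · simp only [if_pos ht, hSop t ht]
  · simp only [lt_irrefl, if_false, Real.sqrt_zero, zero_smul, h0, integral_smul_const,
      integral_gaussianDensity hG, one_smul]

/-- The map `[0,∞) → A`, `hb ↦ S_hb(a)` for `hb > 0` and `0 ↦ a`, is norm continuous. -/
theorem statement4
    (α : (Fin d → ℝ) → A →ₗ[ℂ] A)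
    (hiso : ∀ u (a : A), ‖α u a‖ = ‖a‖)
    (h0 : ∀ a : A, α 0 a = a)
    (hadd : ∀ u v (a : A), α (u + v) a = α u (α v a))
    (hcont : ∀ a : A, Continuous fun u => α u a)
    (G : Matrix (Fin d) (Fin d) ℝ) (hG : G.PosDef)
    (a : A) :
    ContinuousOn (fun hb : ℝ => if 0 < hb then Sop α G hb a else a) (Set.Ici (0 : ℝ)) :=
  statement4_general α hiso h0 hcont G hG a

end
end

section
/- For every smooth vector a ∈ A and every multi-index β, one has lim_{ħ → 0⁺} ∂^β(S_ħ(a)) = ∂^β a in the norm of A; that is, S_ħ(a) → a as ħ → 0⁺ in the topology of the algebra of smooth vectors given by the seminorms a ↦ ‖∂^β a‖. -/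
open MeasureTheory Matrix Topology Filter

noncomputable section

set_option linter.unusedSectionVars false
set_option linter.unusedTactic false
set_option maxHeartbeats 1000000
set_option synthInstance.maxHeartbeats 400000

attribute [local instance 101] secondCountableTopologyEither_of_left


variable {d : ℕ} {A : Type*} [NormedRing A] [StarRing A] [CStarRing A]
  [NormedAlgebra ℂ A] [StarModule ℂ A] [CompleteSpace A]

/-- The partial derivative `∂_i a = ∂/∂u_i α_u(a)|_{u=0}`. -/
def pd (α : (Fin d → ℝ) → A →ₗ[ℂ] A) (i : Fin d) (a : A) : A :=
  fderiv ℝ (fun u => α u a) 0 (Pi.single i 1)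

/-- The iterated partial derivative `∂^β a` for a multi-index `β`. -/
def md (α : (Fin d → ℝ) → A →ₗ[ℂ] A) (β : Fin d → ℕ) : A → A :=
  (List.finRange d).foldr (fun i f => (pd α i)^[β i] ∘ f) id

lemma gauss_base_int : Integrable (fun v : Fin d → ℝ => Real.exp (-(v ⬝ᵥ v))) := by
  have : (fun v : Fin d → ℝ => Real.exp (-(v ⬝ᵥ v)))
      = fun v : Fin d → ℝ => ∏ i, Real.exp (-(v i * v i)) := by
    funext v
    rw [← Real.exp_sum]
    simp [dotProduct, Finset.sum_neg_distrib]
  rw [this]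
  apply Integrable.fintype_prod (f := fun (_ : Fin d) (t : ℝ) => Real.exp (-(t * t)))
  intro i
  have h := integrable_exp_neg_mul_sq (b := 1) one_pos
  simpa [pow_two] using h

lemma gauss_base_val : ∫ v : Fin d → ℝ, Real.exp (-(v ⬝ᵥ v)) = Real.sqrt Real.pi ^ d := by
  have : (fun v : Fin d → ℝ => Real.exp (-(v ⬝ᵥ v)))
      = fun v : Fin d → ℝ => ∏ i, Real.exp (-(v i * v i)) := by
    funext v
    rw [← Real.exp_sum]
    simp [dotProduct, Finset.sum_neg_distrib]
  rw [this]
  rw [volume_pi, integral_fintype_prod_eq_pow (ι := Fin d) (f := fun t : ℝ => Real.exp (-(t * t)))]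
  have h := integral_gaussian 1
  simp only [neg_mul, one_mul, div_one] at h
  rw [Fintype.card_fin]
  congr 1
  rw [← h]
  congr 1
  funext t
  ring_nf

open scoped MatrixOrder in
lemma gauss_sub {G : Matrix (Fin d) (Fin d) ℝ} (hG : G.PosDef) :
    Integrable (fun u : Fin d → ℝ => Real.exp (-(u ⬝ᵥ G *ᵥ u))) ∧
      ∫ u : Fin d → ℝ, Real.exp (-(u ⬝ᵥ G *ᵥ u))
        = Real.pi ^ ((d : ℝ) / 2) / Real.sqrt G.det := by
  set S := CFC.sqrt G with hSdef
  have hSS : S * S = G := CFC.sqrt_mul_sqrt_self G hG.posSemidef.nonneg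
  have hSh : S.IsHermitian := (CFC.sqrt_nonneg G).posSemidef.1
  have hdetS : S.det * S.det = G.det := by rw [← Matrix.det_mul, hSS]
  have hGdet : 0 < G.det := hG.det_pos
  have hSdet : S.det ≠ 0 := by
    intro h
    rw [h, mul_zero] at hdetS
    exact hGdet.ne hdetS
  have hq : ∀ u : Fin d → ℝ, u ⬝ᵥ G *ᵥ u = (S *ᵥ u) ⬝ᵥ (S *ᵥ u) := by
    intro u
    conv_lhs => rw [← hSS, ← Matrix.mulVec_mulVec, Matrix.dotProduct_mulVec]
    congr 1
    rw [← Matrix.vecMul_transpose]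
    congr 1
    have hsymm : Sᵀ = S := by
      rw [← Matrix.conjTranspose_eq_transpose_of_trivial]
      exact hSh.eq
    rw [hsymm]
  -- the linear map
  set f : (Fin d → ℝ) →ₗ[ℝ] (Fin d → ℝ) := S.mulVecLin with hfdef
  have hdetf : LinearMap.det f = S.det := by
    rw [hfdef, ← Matrix.toLin'_apply']
    exact LinearMap.det_toLin' S
  have hfc : Continuous f := f.continuous_of_finiteDimensional
  have hmap : Measure.map f volume = ENNReal.ofReal |(S.det)⁻¹| • volume := by
    rw [← hdetf]
    exact Measure.map_linearMap_addHaar_eq_smul_addHaar volume (hdetf ▸ hSdet)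
  have hgc : Continuous (fun v : Fin d → ℝ => Real.exp (-(v ⬝ᵥ v))) := by
    apply Real.continuous_exp.comp
    apply Continuous.neg
    exact continuous_finset_sum _ fun i _ => ((continuous_apply i).mul (continuous_apply i))
  have hcomp : (fun u : Fin d → ℝ => Real.exp (-(u ⬝ᵥ G *ᵥ u)))
      = (fun v : Fin d → ℝ => Real.exp (-(v ⬝ᵥ v))) ∘ f := by
    funext u
    simp [hq u, hfdef, Function.comp]
  have hint_map : Integrable (fun v : Fin d → ℝ => Real.exp (-(v ⬝ᵥ v))) (Measure.map f volume) := by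
    rw [hmap]
    exact gauss_base_int.smul_measure ENNReal.ofReal_ne_top
  have hint : Integrable (fun u : Fin d → ℝ => Real.exp (-(u ⬝ᵥ G *ᵥ u))) := by
    rw [hcomp]
    exact (integrable_map_measure hgc.aestronglyMeasurable hfc.measurable.aemeasurable).mp hint_map
  refine ⟨hint, ?_⟩
  have habs : |(S.det)⁻¹| = (Real.sqrt G.det)⁻¹ := by
    rw [abs_inv]
    congr 1
    rw [← hdetS, ← pow_two, Real.sqrt_sq_eq_abs]
  calc ∫ u : Fin d → ℝ, Real.exp (-(u ⬝ᵥ G *ᵥ u))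
      = ∫ v, Real.exp (-(v ⬝ᵥ v)) ∂(Measure.map f volume) := by
        rw [hcomp]
        exact (integral_map hfc.measurable.aemeasurable hgc.aestronglyMeasurable).symm
    _ = |(S.det)⁻¹| • ∫ v : Fin d → ℝ, Real.exp (-(v ⬝ᵥ v)) := by
        rw [hmap, integral_smul_measure, ENNReal.toReal_ofReal (abs_nonneg _)]
    _ = Real.pi ^ ((d : ℝ) / 2) / Real.sqrt G.det := by
        rw [gauss_base_val, habs, smul_eq_mul]
        rw [div_eq_mul_inv, mul_comm]
        congr 1
        rw [Real.sqrt_eq_rpow, ← Real.rpow_natCast (Real.pi ^ ((1:ℝ)/2)) d,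
          ← Real.rpow_mul Real.pi_pos.le]
        norm_num
        rw [mul_comm, mul_one_div]


lemma gauss_int {G : Matrix (Fin d) (Fin d) ℝ} (hG : G.PosDef) :
    Integrable (fun u : Fin d → ℝ => Real.exp (-(u ⬝ᵥ G *ᵥ u))) := (gauss_sub hG).1

lemma gauss_val {G : Matrix (Fin d) (Fin d) ℝ} (hG : G.PosDef) :
    ∫ u : Fin d → ℝ, Real.exp (-(u ⬝ᵥ G *ᵥ u))
      = Real.pi ^ ((d : ℝ) / 2) / Real.sqrt G.det := (gauss_sub hG).2

/-- The normalized Gaussian weight. -/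
def phi (G : Matrix (Fin d) (Fin d) ℝ) (w : Fin d → ℝ) : ℝ :=
  Real.sqrt G.det / Real.pi ^ ((d : ℝ) / 2) * Real.exp (-(w ⬝ᵥ G *ᵥ w))

lemma phi_nonneg (G : Matrix (Fin d) (Fin d) ℝ) (w : Fin d → ℝ) : 0 ≤ phi G w := by
  apply mul_nonneg
  · positivity
  · exact (Real.exp_pos _).le

lemma q_cont (G : Matrix (Fin d) (Fin d) ℝ) : Continuous fun w : Fin d → ℝ => w ⬝ᵥ G *ᵥ w := by
  have : ∀ w : Fin d → ℝ, w ⬝ᵥ G *ᵥ w = ∑ i, w i * ∑ j, G i j * w j := by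
    intro w
    simp [dotProduct, Matrix.mulVec]
  simp only [this]
  refine continuous_finset_sum _ fun i _ => (continuous_apply i).mul ?_
  exact continuous_finset_sum _ fun j _ => continuous_const.mul (continuous_apply j)

lemma phi_cont (G : Matrix (Fin d) (Fin d) ℝ) : Continuous (phi G) := by
  unfold phi
  exact continuous_const.mul (Real.continuous_exp.comp (q_cont G).neg)

lemma phi_int {G : Matrix (Fin d) (Fin d) ℝ} (hG : G.PosDef) : Integrable (phi G) :=
  (gauss_int hG).const_mul _

lemma phi_integral {G : Matrix (Fin d) (Fin d) ℝ} (hG : G.PosDef) :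
    ∫ w : Fin d → ℝ, phi G w = 1 := by
  unfold phi
  rw [integral_const_mul, gauss_val hG]
  have h1 : Real.sqrt G.det ≠ 0 := by
    have := hG.det_pos
    positivity
  have h2 : Real.pi ^ ((d : ℝ) / 2) ≠ 0 := by
    have := Real.pi_pos
    positivity
  field_simp

/-- The normalized smoothing operator. -/
def T (α : (Fin d → ℝ) → A →ₗ[ℂ] A) (G : Matrix (Fin d) (Fin d) ℝ) (t : ℝ) (b : A) : A :=
  ∫ w : Fin d → ℝ, phi G w • α (t • w) b

lemma Sop_eq_T (α : (Fin d → ℝ) → A →ₗ[ℂ] A) (G : Matrix (Fin d) (Fin d) ℝ) {hb : ℝ}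
    (hhb : 0 < hb) (x : A) : Sop α G hb x = T α G (Real.sqrt hb) x := by
  have hR : (0:ℝ) < Real.sqrt hb := Real.sqrt_pos.mpr hhb
  have hRd : Real.sqrt hb ^ d = hb ^ ((d : ℝ) / 2) := by
    rw [Real.sqrt_eq_rpow, ← Real.rpow_natCast (hb ^ ((1:ℝ)/2)) d, ← Real.rpow_mul hhb.le,
      mul_comm, mul_one_div]
  have key := Measure.integral_comp_smul_of_nonneg (μ := volume)
    (fun u : Fin d → ℝ =>
      (Real.sqrt G.det / (Real.pi * hb) ^ ((d : ℝ) / 2) * Real.exp (-(u ⬝ᵥ (G *ᵥ u)) / hb)) • α u x)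
    (Real.sqrt hb) (hR := hR.le)
  rw [Module.finrank_fintype_fun_eq_card, Fintype.card_fin] at key
  -- key : ∫ w, F (√hb • w) = (√hb ^ d)⁻¹ • ∫ u, F u
  have hpow : Real.sqrt hb ^ d ≠ 0 := by positivity
  have hq : ∀ w : Fin d → ℝ,
      (Real.sqrt hb • w) ⬝ᵥ G *ᵥ (Real.sqrt hb • w) = hb * (w ⬝ᵥ G *ᵥ w) := by
    intro w
    rw [Matrix.mulVec_smul, smul_dotProduct, dotProduct_smul]
    rw [smul_eq_mul, smul_eq_mul, ← mul_assoc, Real.mul_self_sqrt hhb.le]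
  have hπ : Real.pi ^ ((d : ℝ) / 2) ≠ 0 := by
    have := Real.pi_pos
    positivity
  have hhb2 : hb ^ ((d : ℝ) / 2) ≠ 0 := by positivity
  rw [Sop, T]
  calc ∫ u : Fin d → ℝ,
        (Real.sqrt G.det / (Real.pi * hb) ^ ((d : ℝ) / 2) * Real.exp (-(u ⬝ᵥ (G *ᵥ u)) / hb)) • α u x
      = (Real.sqrt hb ^ d) • ∫ w : Fin d → ℝ,
          (Real.sqrt G.det / (Real.pi * hb) ^ ((d : ℝ) / 2)
            * Real.exp (-((Real.sqrt hb • w) ⬝ᵥ (G *ᵥ (Real.sqrt hb • w))) / hb))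
            • α (Real.sqrt hb • w) x := by
        rw [key, smul_inv_smul₀ hpow]
    _ = ∫ w : Fin d → ℝ, phi G w • α (Real.sqrt hb • w) x := by
        rw [← integral_smul]
        congr 1
        funext w
        rw [smul_smul]
        congr 1
        rw [hq w]
        have hdiv : -(hb * (w ⬝ᵥ G *ᵥ w)) / hb = -(w ⬝ᵥ G *ᵥ w) := by
          field_simp
        rw [hdiv, phi, ← mul_assoc]
        congr 1
        rw [hRd, Real.mul_rpow Real.pi_pos.le hhb.le]
        field_simp

/-- `α u` as a real continuous linear map. -/
def aL (α : (Fin d → ℝ) → A →ₗ[ℂ] A) (hiso : ∀ u (a : A), ‖α u a‖ = ‖a‖)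
    (u : Fin d → ℝ) : A →L[ℝ] A :=
  LinearMap.mkContinuous ((α u).restrictScalars ℝ) 1 (fun x => by
    rw [one_mul]
    exact (hiso u x).le)

lemma aL_apply (α : (Fin d → ℝ) → A →ₗ[ℂ] A) (hiso : ∀ u (a : A), ‖α u a‖ = ‖a‖)
    (u : Fin d → ℝ) (x : A) : aL α hiso u x = α u x := rfl

lemma fderiv_conj (α : (Fin d → ℝ) → A →ₗ[ℂ] A)
    (hiso : ∀ u (a : A), ‖α u a‖ = ‖a‖)
    (hadd : ∀ u v (a : A), α (u + v) a = α u (α v a))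
    {a : A} (ha : ContDiff ℝ (⊤ : ℕ∞) fun u => α u a) (u : Fin d → ℝ) :
    fderiv ℝ (fun v => α v a) u
      = (aL α hiso u).comp (fderiv ℝ (fun v => α v a) 0) := by
  have hdiff : Differentiable ℝ (fun v => α v a) := ha.differentiable (by simp)
  have h1 : HasFDerivAt (fun v : Fin d → ℝ => α (u + v) a)
      (fderiv ℝ (fun v => α v a) u) 0 := by
    have hg : HasFDerivAt (fun v : Fin d → ℝ => α v a)
        (fderiv ℝ (fun v => α v a) u) (u + 0) := by
      rw [add_zero]
      exact (hdiff u).hasFDerivAt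
    have hf : HasFDerivAt (fun v : Fin d → ℝ => u + v)
        (ContinuousLinearMap.id ℝ (Fin d → ℝ)) 0 :=
      (hasFDerivAt_id (0 : Fin d → ℝ)).const_add u
    exact hg.comp 0 hf
  have h2 : HasFDerivAt (fun v : Fin d → ℝ => α (u + v) a)
      ((aL α hiso u).comp (fderiv ℝ (fun v => α v a) 0)) 0 := by
    have heq : (fun v : Fin d → ℝ => α (u + v) a)
        = fun v => aL α hiso u (α v a) := by
      funext v
      rw [aL_apply, hadd]
    rw [heq]
    exact (aL α hiso u).hasFDerivAt.comp 0 (hdiff 0).hasFDerivAt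
  exact h1.unique h2

lemma apd (α : (Fin d → ℝ) → A →ₗ[ℂ] A)
    (hiso : ∀ u (a : A), ‖α u a‖ = ‖a‖)
    (hadd : ∀ u v (a : A), α (u + v) a = α u (α v a))
    {a : A} (ha : ContDiff ℝ (⊤ : ℕ∞) fun u => α u a) (i : Fin d) (u : Fin d → ℝ) :
    α u (pd α i a) = fderiv ℝ (fun v => α v a) u (Pi.single i 1) := by
  rw [fderiv_conj α hiso hadd ha u]
  rfl

lemma Dnorm (α : (Fin d → ℝ) → A →ₗ[ℂ] A)
    (hiso : ∀ u (a : A), ‖α u a‖ = ‖a‖)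
    (hadd : ∀ u v (a : A), α (u + v) a = α u (α v a))
    {a : A} (ha : ContDiff ℝ (⊤ : ℕ∞) fun u => α u a) (u : Fin d → ℝ) :
    ‖fderiv ℝ (fun v => α v a) u‖ = ‖fderiv ℝ (fun v => α v a) 0‖ := by
  rw [fderiv_conj α hiso hadd ha u]
  apply le_antisymm
  · apply ContinuousLinearMap.opNorm_le_bound _ (norm_nonneg _)
    intro x
    rw [ContinuousLinearMap.comp_apply, aL_apply, hiso]
    exact ContinuousLinearMap.le_opNorm _ x
  · apply ContinuousLinearMap.opNorm_le_bound _ (norm_nonneg _)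
    intro x
    have : ‖fderiv ℝ (fun v => α v a) 0 x‖
        = ‖((aL α hiso u).comp (fderiv ℝ (fun v => α v a) 0)) x‖ := by
      rw [ContinuousLinearMap.comp_apply, aL_apply, hiso]
    rw [this]
    exact ContinuousLinearMap.le_opNorm _ x

lemma smooth_pd (α : (Fin d → ℝ) → A →ₗ[ℂ] A)
    (hiso : ∀ u (a : A), ‖α u a‖ = ‖a‖)
    (hadd : ∀ u v (a : A), α (u + v) a = α u (α v a))
    {a : A} (ha : ContDiff ℝ (⊤ : ℕ∞) fun u => α u a) (i : Fin d) :
    ContDiff ℝ (⊤ : ℕ∞) fun u => α u (pd α i a) := by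
  have heq : (fun u => α u (pd α i a))
      = fun u => fderiv ℝ (fun v => α v a) u (Pi.single i 1) :=
    funext fun u => apd α hiso hadd ha i u
  rw [heq]
  exact (ha.fderiv_right (by simp)).clm_apply contDiff_const

lemma int_phi_smul {E : Type*} [NormedAddCommGroup E] [NormedSpace ℝ E]
    {G : Matrix (Fin d) (Fin d) ℝ} (hG : G.PosDef) {g : (Fin d → ℝ) → E}
    (hgc : Continuous g) {M : ℝ} (hM : ∀ w, ‖g w‖ ≤ M) :
    Integrable fun w => phi G w • g w := by
  apply Integrable.mono' ((phi_int hG).const_mul M)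
    ((phi_cont G).smul hgc).aestronglyMeasurable
  apply Eventually.of_forall
  intro w
  show ‖phi G w • g w‖ ≤ _
  rw [norm_smul, Real.norm_eq_abs, abs_of_nonneg (phi_nonneg G w), mul_comm]
  exact mul_le_mul_of_nonneg_right (hM w) (phi_nonneg G w)

lemma T_pd (α : (Fin d → ℝ) → A →ₗ[ℂ] A)
    (hiso : ∀ u (a : A), ‖α u a‖ = ‖a‖)
    (hadd : ∀ u v (a : A), α (u + v) a = α u (α v a))
    {G : Matrix (Fin d) (Fin d) ℝ} (hG : G.PosDef)
    {a : A} (ha : ContDiff ℝ (⊤ : ℕ∞) fun u => α u a) (t : ℝ) (i : Fin d) :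
    pd α i (T α G t a) = T α G t (pd α i a) := by
  set D := fderiv ℝ (fun v => α v a) with hD
  have hdiff : Differentiable ℝ (fun v => α v a) := ha.differentiable (by simp)
  have hDcont : Continuous D := (ha.fderiv_right (m := (⊤ : ℕ∞)) (by simp)).continuous
  have hac : Continuous (fun v => α v a) := ha.continuous
  have haff : ∀ v : Fin d → ℝ, Continuous fun w : Fin d → ℝ => v + t • w :=
    fun v => continuous_const.add (continuous_id.const_smul t)
  have hint : ∀ v : Fin d → ℝ, Integrable fun w => phi G w • α (v + t • w) a :=
    fun v => int_phi_smul hG (hac.comp (haff v)) (M := ‖a‖)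
      (fun w => le_of_eq (hiso _ a))
  have hint0 : Integrable fun w : Fin d → ℝ => phi G w • α (t • w) a :=
    int_phi_smul hG (hac.comp (continuous_id.const_smul t)) (M := ‖a‖)
      (fun w => le_of_eq (hiso _ a))
  have hrw : (fun v => α v (T α G t a)) = fun v => ∫ w, phi G w • α (v + t • w) a := by
    funext v
    calc α v (T α G t a) = aL α hiso v (∫ w, phi G w • α (t • w) a) := rfl
      _ = ∫ w, aL α hiso v (phi G w • α (t • w) a) :=
          ((aL α hiso v).integral_comp_comm hint0).symm
      _ = ∫ w, phi G w • α (v + t • w) a := by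
          congr 1
          funext w
          rw [_root_.map_smul, aL_apply, ← hadd]
  have hkey : HasFDerivAt (fun v => ∫ w, phi G w • α (v + t • w) a)
      (∫ w, phi G w • D ((0 : Fin d → ℝ) + t • w)) 0 := by
    apply hasFDerivAt_integral_of_dominated_of_fderiv_le
      (F' := fun v w => phi G w • D (v + t • w))
      (bound := fun w => ‖D 0‖ * phi G w) (s := Metric.ball 0 1) (Metric.ball_mem_nhds _ one_pos)
    · exact Eventually.of_forall fun v =>
        ((phi_cont G).smul (hac.comp (haff v))).aestronglyMeasurable
    · exact hint 0
    · exact ((phi_cont G).smul (hDcont.comp (haff 0))).aestronglyMeasurable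
    · apply Eventually.of_forall
      intro w v _
      refine le_trans (ContinuousLinearMap.opNorm_smul_le _ _) ?_
      rw [Real.norm_eq_abs, abs_of_nonneg (phi_nonneg G w),
        Dnorm α hiso hadd ha (v + t • w), mul_comm]
    · exact (phi_int hG).const_mul _
    · apply Eventually.of_forall
      intro w v _
      have hg : HasFDerivAt (fun y : Fin d → ℝ => α y a) (D (v + t • w)) (v + t • w) :=
        (hdiff _).hasFDerivAt
      have hf : HasFDerivAt (fun y : Fin d → ℝ => y + t • w)
          (ContinuousLinearMap.id ℝ (Fin d → ℝ)) v :=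
        (hasFDerivAt_id v).add_const (t • w)
      have hcomp := hg.comp v hf
      have hcs := hcomp.const_smul (phi G w)
      rw [ContinuousLinearMap.comp_id] at hcs
      exact hcs
  have hintD : Integrable fun w : Fin d → ℝ => phi G w • D (t • w) :=
    int_phi_smul hG (hDcont.comp (continuous_id.const_smul t)) (M := ‖D 0‖)
      (fun w => le_of_eq (Dnorm α hiso hadd ha (t • w)))
  have hfd : fderiv ℝ (fun v => α v (T α G t a)) 0
      = ∫ w, phi G w • D (t • w) := by
    rw [hrw]
    have := hkey.fderiv
    simpa using this
  rw [pd, hfd, ContinuousLinearMap.integral_apply hintD]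
  rw [T]
  congr 1
  funext w
  rw [apd α hiso hadd ha i (t • w)]
  simp [hD]

lemma T_tendsto (α : (Fin d → ℝ) → A →ₗ[ℂ] A)
    (hiso : ∀ u (a : A), ‖α u a‖ = ‖a‖)
    (h0 : ∀ a : A, α 0 a = a)
    (hcont : ∀ a : A, Continuous fun u => α u a)
    {G : Matrix (Fin d) (Fin d) ℝ} (hG : G.PosDef) (b : A) :
    Tendsto (fun t : ℝ => T α G t b) (𝓝 (0 : ℝ)) (𝓝 b) := by
  have hval : ∫ w : Fin d → ℝ, phi G w • b = b := by
    rw [integral_smul_const, phi_integral hG, one_smul]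
  have key := tendsto_integral_filter_of_dominated_convergence
    (μ := (volume : Measure (Fin d → ℝ))) (l := 𝓝 (0 : ℝ))
    (F := fun t w => phi G w • α (t • w) b) (f := fun w => phi G w • b)
    (bound := fun w => ‖b‖ * phi G w)
    (Eventually.of_forall fun t =>
      ((phi_cont G).smul ((hcont b).comp (continuous_id.const_smul t))).aestronglyMeasurable)
    (Eventually.of_forall fun t => Eventually.of_forall fun w => by
      rw [norm_smul, Real.norm_eq_abs, abs_of_nonneg (phi_nonneg G w), hiso, mul_comm])
    ((phi_int hG).const_mul _)
    (Eventually.of_forall fun w => by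
      have hc : Continuous fun t : ℝ => phi G w • α (t • w) b :=
        continuous_const.smul ((hcont b).comp (continuous_id.smul continuous_const))
      have := hc.tendsto 0
      simpa [h0 b] using this)
  rw [hval] at key
  exact key

lemma iter_pair (α : (Fin d → ℝ) → A →ₗ[ℂ] A)
    (hiso : ∀ u (a : A), ‖α u a‖ = ‖a‖)
    (hadd : ∀ u v (a : A), α (u + v) a = α u (α v a))
    {G : Matrix (Fin d) (Fin d) ℝ} (hG : G.PosDef) (i : Fin d) (n : ℕ) :
    ∀ a : A, ContDiff ℝ (⊤ : ℕ∞) (fun u => α u a) →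
      ContDiff ℝ (⊤ : ℕ∞) (fun u => α u ((pd α i)^[n] a)) ∧
        ∀ t, (pd α i)^[n] (T α G t a) = T α G t ((pd α i)^[n] a) := by
  induction n with
  | zero =>
    intro a ha
    refine ⟨by simpa using ha, fun t => by simp⟩
  | succ n ih =>
    intro a ha
    obtain ⟨h1, h2⟩ := ih a ha
    constructor
    · have hstep : (pd α i)^[n + 1] a = pd α i ((pd α i)^[n] a) :=
        Function.iterate_succ_apply' _ _ _
      rw [hstep]
      exact smooth_pd α hiso hadd h1 i
    · intro t
      rw [Function.iterate_succ_apply', Function.iterate_succ_apply', h2 t,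
        T_pd α hiso hadd hG h1 t i]

lemma list_pair (α : (Fin d → ℝ) → A →ₗ[ℂ] A)
    (hiso : ∀ u (a : A), ‖α u a‖ = ‖a‖)
    (hadd : ∀ u v (a : A), α (u + v) a = α u (α v a))
    {G : Matrix (Fin d) (Fin d) ℝ} (hG : G.PosDef) (β : Fin d → ℕ) (L : List (Fin d)) :
    ∀ a : A, ContDiff ℝ (⊤ : ℕ∞) (fun u => α u a) →
      ContDiff ℝ (⊤ : ℕ∞) (fun u => α u (L.foldr (fun i f => (pd α i)^[β i] ∘ f) id a)) ∧
        ∀ t, L.foldr (fun i f => (pd α i)^[β i] ∘ f) id (T α G t a)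
          = T α G t (L.foldr (fun i f => (pd α i)^[β i] ∘ f) id a) := by
  induction L with
  | nil =>
    intro a ha
    refine ⟨by simpa using ha, fun t => by simp⟩
  | cons j Ltl ih =>
    intro a ha
    obtain ⟨h1, h2⟩ := ih a ha
    simp only [List.foldr_cons, Function.comp_apply]
    obtain ⟨g1, g2⟩ := iter_pair α hiso hadd hG j (β j) _ h1
    exact ⟨g1, fun t => by rw [h2 t, g2 t]⟩

/-- For every smooth vector `a` and every multi-index `β`,
`∂^β (S_hb(a)) → ∂^β a` in norm as `hb → 0⁺`,
i.e. `S_hb(a) → a` in the topology of the algebra of smooth vectors. -/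
theorem statement6
    (α : (Fin d → ℝ) → A →ₗ[ℂ] A)
    (hiso : ∀ u (a : A), ‖α u a‖ = ‖a‖)
    (h0 : ∀ a : A, α 0 a = a)
    (hadd : ∀ u v (a : A), α (u + v) a = α u (α v a))
    (hcont : ∀ a : A, Continuous fun u => α u a)
    (G : Matrix (Fin d) (Fin d) ℝ) (hG : G.PosDef)
    (a : A) (ha : ContDiff ℝ (⊤ : ℕ∞) fun u => α u a) :
    ∀ β : Fin d → ℕ,
      Tendsto (fun hb : ℝ => md α β (Sop α G hb a)) (𝓝[>] (0 : ℝ)) (𝓝 (md α β a)) := by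
  intro β
  obtain ⟨-, hcomm⟩ := list_pair α hiso hadd hG β (List.finRange d) a ha
  have hTb : Tendsto (fun t : ℝ => T α G t (md α β a)) (𝓝 (0 : ℝ)) (𝓝 (md α β a)) :=
    T_tendsto α hiso h0 hcont hG _
  have hsqrt : Tendsto (fun hb : ℝ => Real.sqrt hb) (𝓝[>] (0 : ℝ)) (𝓝 (0 : ℝ)) :=
    (Real.continuous_sqrt.tendsto' 0 0 Real.sqrt_zero).mono_left nhdsWithin_le_nhds
  have h1 := hTb.comp hsqrt
  apply Tendsto.congr' _ h1
  filter_upwards [self_mem_nhdsWithin] with hb hhb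
  show T α G (Real.sqrt hb) (md α β a) = md α β (Sop α G hb a)
  rw [Sop_eq_T α G hhb a]
  exact (hcomm (Real.sqrt hb)).symm


end
end

section
/- If a ∈ A is a smooth vector, then S_g(a) = ∫_{ℝᵈ} e^{−g(u,u)} α_u(a) du is again a smooth vector, and for every multi-index β one has ∂^β(S_g(a)) = S_g(∂^β a); consequently ‖∂^β(S_g(a))‖ ≤ (π^{d/2}/√(det G)) · ‖∂^β a‖, so S_g is continuous on the algebra of smooth vectors equipped with the seminorms a ↦ ‖∂^β a‖. -/
open MeasureTheory Matrix Topology Filter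

set_option linter.unusedSectionVars false

noncomputable section

variable {d : ℕ} {A : Type*} [NormedRing A] [StarRing A] [CStarRing A]
  [NormedAlgebra ℂ A] [StarModule ℂ A] [CompleteSpace A]

/-- The operator `S_g(a) = ∫ e^{−g(u,u)} α_u(a) du`. -/
def Sg (α : (Fin d → ℝ) → A →ₗ[ℂ] A) (G : Matrix (Fin d) (Fin d) ℝ) (a : A) : A :=
  ∫ u : Fin d → ℝ, Real.exp (-(u ⬝ᵥ (G *ᵥ u))) • α u a

section Gauss

lemma gauss_cont (G : Matrix (Fin d) (Fin d) ℝ) :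
    Continuous (fun u : Fin d → ℝ => Real.exp (-(u ⬝ᵥ G *ᵥ u))) := by
  apply Real.continuous_exp.comp
  apply Continuous.neg
  have : (fun u : Fin d → ℝ => u ⬝ᵥ G *ᵥ u)
      = fun u : Fin d → ℝ => ∑ i, u i * ∑ j, G i j * u j := rfl
  rw [this]
  refine continuous_finset_sum _ fun i _ => ?_
  exact (continuous_apply i).mul
    (continuous_finset_sum _ fun j _ => continuous_const.mul (continuous_apply j))

open scoped MatrixOrder in
lemma gauss_main (G : Matrix (Fin d) (Fin d) ℝ) (hG : G.PosDef) :
    Integrable (fun u : Fin d → ℝ => Real.exp (-(u ⬝ᵥ G *ᵥ u))) ∧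
    ∫ u : Fin d → ℝ, Real.exp (-(u ⬝ᵥ G *ᵥ u))
      = Real.pi ^ ((d : ℝ) / 2) / Real.sqrt G.det := by
  classical
  set S := CFC.sqrt G with hS
  have hSsq : S * S = G := CFC.sqrt_mul_sqrt_self G hG.posSemidef.nonneg
  have hdet2 : S.det ^ 2 = G.det := by rw [sq, ← det_mul, hSsq]
  have hnn : 0 ≤ S.det := by
    have hherm := (CFC.sqrt_nonneg G).posSemidef.1
    rw [hherm.det_eq_prod_eigenvalues]
    exact Finset.prod_nonneg fun i _ =>
      (CFC.sqrt_nonneg G).posSemidef.eigenvalues_nonneg i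
  have hpos : 0 < S.det := by
    rcases lt_or_eq_of_le hnn with h | h
    · exact h
    · exfalso; have := hG.det_pos; rw [← hdet2, ← h] at this; simp at this
  have hSunit : IsUnit S.det := isUnit_iff_ne_zero.mpr hpos.ne'
  have hdetsqrt : S.det = Real.sqrt G.det := by rw [← hdet2, Real.sqrt_sq hnn]
  have hSsym : Sᵀ = S := (CFC.sqrt_nonneg G).posSemidef.1
  set B := S⁻¹ with hB
  have hdetB : B.det = S.det⁻¹ := by rw [hB, det_nonsing_inv, Ring.inverse_eq_inv]
  have hdetBne : B.det ≠ 0 := by rw [hdetB]; exact inv_ne_zero hpos.ne'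
  have hBsym : Bᵀ = B := by rw [hB, transpose_nonsing_inv, hSsym]
  have hBGB : Bᵀ * G * B = 1 := by
    rw [hBsym, hB, ← hSsq, ← mul_assoc, Matrix.nonsing_inv_mul S hSunit, mul_assoc, one_mul,
      Matrix.mul_nonsing_inv S hSunit]
  set f : (Fin d → ℝ) → ℝ := fun u => Real.exp (-(u ⬝ᵥ G *ᵥ u)) with hf
  have hcomp : ∀ v : Fin d → ℝ, f (Matrix.toLin' B v) = Real.exp (-(v ⬝ᵥ v)) := by
    intro v
    have key : (B *ᵥ v) ⬝ᵥ G *ᵥ (B *ᵥ v) = v ⬝ᵥ v := by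
      rw [dotProduct_mulVec, vecMul_mulVec, ← dotProduct_mulVec, mulVec_mulVec, hBGB, one_mulVec]
    rw [hf]
    simp only [Matrix.toLin'_apply]
    rw [key]
  have hcont : Continuous f := gauss_cont G
  have hmap : Measure.map (Matrix.toLin' B) volume
      = ENNReal.ofReal |B.det⁻¹| • volume :=
    Real.map_matrix_volume_pi_eq_smul_volume_pi hdetBne
  have habs : |B.det⁻¹| = S.det := by rw [hdetB, inv_inv, abs_of_pos hpos]
  have hTmeas : AEMeasurable (Matrix.toLin' B) (volume : Measure (Fin d → ℝ)) :=
    (LinearMap.continuous_on_pi _).measurable.aemeasurable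
  have heq : (fun v : Fin d → ℝ => Real.exp (-(v ⬝ᵥ v)))
      = fun v : Fin d → ℝ => ∏ i, Real.exp (-(v i) ^ 2) := by
    funext v
    rw [← Real.exp_sum]
    congr 1
    simp [dotProduct, sq]
  have h1 : Integrable (fun x : ℝ => Real.exp (-x ^ 2)) := by
    simpa using integrable_exp_neg_mul_sq (by norm_num : (0:ℝ) < 1)
  have hstdInt : Integrable (fun v : Fin d → ℝ => Real.exp (-(v ⬝ᵥ v))) := by
    rw [heq]; exact Integrable.fintype_prod (fun _ => h1)
  have hstdVal : ∫ v : Fin d → ℝ, Real.exp (-(v ⬝ᵥ v)) = Real.pi ^ ((d : ℝ) / 2) := by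
    rw [heq, volume_pi, integral_fintype_prod_eq_pow (ι := Fin d) (fun x : ℝ => Real.exp (-x ^ 2))]
    have : ∫ x : ℝ, Real.exp (-x ^ 2) = Real.sqrt Real.pi := by
      simpa using integral_gaussian 1
    rw [this, Fintype.card_fin, Real.sqrt_eq_rpow, ← Real.rpow_natCast (Real.pi ^ ((1:ℝ)/2)) d,
      ← Real.rpow_mul Real.pi_pos.le]
    ring_nf
  have hintmap : Integrable f (Measure.map (Matrix.toLin' B) volume) := by
    rw [integrable_map_measure hcont.aestronglyMeasurable hTmeas]
    have : (f ∘ Matrix.toLin' B) = fun v : Fin d → ℝ => Real.exp (-(v ⬝ᵥ v)) := by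
      funext v; exact hcomp v
    rw [this]; exact hstdInt
  have hc_ne_zero : ENNReal.ofReal |B.det⁻¹| ≠ 0 := by
    rw [habs]; exact (ENNReal.ofReal_pos.mpr hpos).ne'
  have hInt : Integrable f := by
    rw [hmap] at hintmap
    exact (integrable_smul_measure hc_ne_zero ENNReal.ofReal_ne_top).mp hintmap
  refine ⟨hInt, ?_⟩
  have h2 : ∫ x, f x ∂(Measure.map (Matrix.toLin' B) volume) = Real.pi ^ ((d : ℝ) / 2) := by
    rw [integral_map hTmeas hcont.aestronglyMeasurable]
    rw [show (fun v : Fin d → ℝ => f (Matrix.toLin' B v)) = fun v => Real.exp (-(v ⬝ᵥ v)) from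
      funext hcomp]
    exact hstdVal
  rw [hmap, integral_smul_measure] at h2
  have htoReal : (ENNReal.ofReal |B.det⁻¹|).toReal = S.det := by
    rw [ENNReal.toReal_ofReal (abs_nonneg _), habs]
  rw [htoReal, smul_eq_mul] at h2
  rw [← hdetsqrt, eq_div_iff hpos.ne', mul_comm]
  exact h2

end Gauss

section Op

variable (α : (Fin d → ℝ) → A →ₗ[ℂ] A)

/-- `α u` as a continuous ℝ-linear map. -/
def alphaL (hiso : ∀ u (a : A), ‖α u a‖ = ‖a‖) (u : Fin d → ℝ) : A →L[ℝ] A :=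
  LinearMap.mkContinuous ((α u).restrictScalars ℝ) 1 (by
    intro a; rw [one_mul]; exact le_of_eq (hiso u a))

@[simp] lemma alphaL_apply (hiso : ∀ u (a : A), ‖α u a‖ = ‖a‖) (u : Fin d → ℝ) (a : A) :
    alphaL α hiso u a = α u a := rfl

variable (hiso : ∀ u (a : A), ‖α u a‖ = ‖a‖)
  (hcont : ∀ a : A, Continuous fun u => α u a)
  (G : Matrix (Fin d) (Fin d) ℝ) (hG : G.PosDef)

include hiso hcont hG in
lemma integrand_integrable (a : A) :
    Integrable (fun u : Fin d → ℝ => Real.exp (-(u ⬝ᵥ (G *ᵥ u))) • α u a) := by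
  have hc : Continuous (fun u : Fin d → ℝ => Real.exp (-(u ⬝ᵥ (G *ᵥ u))) • α u a) :=
    (gauss_cont G).smul (hcont a)
  refine Integrable.mono' ((gauss_main G hG).1.mul_const ‖a‖) hc.aestronglyMeasurable ?_
  filter_upwards with u
  rw [norm_smul, Real.norm_eq_abs, Real.abs_exp, hiso]

include hiso hG in
lemma Sg_norm_le (a : A) :
    ‖Sg α G a‖ ≤ (Real.pi ^ ((d : ℝ) / 2) / Real.sqrt G.det) * ‖a‖ := by
  calc ‖Sg α G a‖ ≤ ∫ u : Fin d → ℝ, ‖Real.exp (-(u ⬝ᵥ (G *ᵥ u))) • α u a‖ :=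
        norm_integral_le_integral_norm _
  _ = ∫ u : Fin d → ℝ, Real.exp (-(u ⬝ᵥ (G *ᵥ u))) * ‖a‖ := by
      congr 1; funext u; rw [norm_smul, Real.norm_eq_abs, Real.abs_exp, hiso]
  _ = (∫ u : Fin d → ℝ, Real.exp (-(u ⬝ᵥ (G *ᵥ u)))) * ‖a‖ := integral_mul_const _ _
  _ = (Real.pi ^ ((d : ℝ) / 2) / Real.sqrt G.det) * ‖a‖ := by rw [(gauss_main G hG).2]

/-- `S_g` as a continuous ℝ-linear map. -/
def SgL : A →L[ℝ] A :=
  LinearMap.mkContinuous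
    { toFun := Sg α G
      map_add' := fun a b => by
        unfold Sg
        rw [← integral_add (integrand_integrable α hiso hcont G hG a)
          (integrand_integrable α hiso hcont G hG b)]
        congr 1; funext u; rw [map_add, smul_add]
      map_smul' := fun r a => by
        show (∫ u : Fin d → ℝ, Real.exp (-(u ⬝ᵥ (G *ᵥ u))) • α u (r • a))
          = (RingHom.id ℝ) r • ∫ u : Fin d → ℝ, Real.exp (-(u ⬝ᵥ (G *ᵥ u))) • α u a
        rw [RingHom.id_apply, ← integral_smul]
        congr 1; funext u
        rw [LinearMap.map_smul_of_tower, smul_comm] }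
    (Real.pi ^ ((d : ℝ) / 2) / Real.sqrt G.det)
    (fun a => Sg_norm_le α hiso G hG a)

@[simp] lemma SgL_apply (a : A) : SgL α hiso hcont G hG a = Sg α G a := rfl

variable (hadd : ∀ u v (a : A), α (u + v) a = α u (α v a))

include hadd in
lemma alpha_comm (u v : Fin d → ℝ) (a : A) : α v (α u a) = α u (α v a) := by
  rw [← hadd, add_comm, hadd]

include hiso hcont hG hadd in
lemma alpha_Sg (v : Fin d → ℝ) (a : A) : α v (Sg α G a) = Sg α G (α v a) := by
  have h := (alphaL α hiso v).integral_comp_comm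
    (integrand_integrable α hiso hcont G hG a)
  have h2 : α v (Sg α G a) = ∫ u : Fin d → ℝ,
      alphaL α hiso v (Real.exp (-(u ⬝ᵥ (G *ᵥ u))) • α u a) := by
    rw [h]; rfl
  rw [h2]
  unfold Sg
  congr 1; funext u
  rw [(alphaL α hiso v).map_smul, alphaL_apply, alpha_comm α hadd]

end Op

section Smooth

variable (α : (Fin d → ℝ) → A →ₗ[ℂ] A)
  (hiso : ∀ u (a : A), ‖α u a‖ = ‖a‖)
  (hcont : ∀ a : A, Continuous fun u => α u a)
  (hadd : ∀ u v (a : A), α (u + v) a = α u (α v a))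
  (G : Matrix (Fin d) (Fin d) ℝ) (hG : G.PosDef)

include hiso hadd in
lemma alpha_fderiv (a : A) (ha : ContDiff ℝ (⊤ : ℕ∞) fun u => α u a) (u : Fin d → ℝ) :
    HasFDerivAt (fun w => α w a)
      ((alphaL α hiso u).comp (fderiv ℝ (fun w => α w a) 0)) u := by
  set F : (Fin d → ℝ) → A := fun w => α w a with hF
  have hd0 : HasFDerivAt F (fderiv ℝ F 0) 0 :=
    ((ha.differentiable (by simp)) 0).hasFDerivAt
  have hsub : HasFDerivAt (fun w : Fin d → ℝ => w - u)
      (ContinuousLinearMap.id ℝ (Fin d → ℝ)) u := by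
    simpa using (hasFDerivAt_id (𝕜 := ℝ) u).sub_const u
  have hd0' : HasFDerivAt F (fderiv ℝ F 0) ((fun w : Fin d → ℝ => w - u) u) := by
    simp only [sub_self]; exact hd0
  have h3 : HasFDerivAt (fun w => F (w - u))
      ((fderiv ℝ F 0).comp (ContinuousLinearMap.id ℝ (Fin d → ℝ))) u :=
    HasFDerivAt.comp (g := F) (f := fun w : Fin d → ℝ => w - u) u hd0' hsub
  have h4 : HasFDerivAt (fun w => alphaL α hiso u (F (w - u)))
      ((alphaL α hiso u).comp ((fderiv ℝ F 0).comp (ContinuousLinearMap.id ℝ (Fin d → ℝ)))) u :=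
    ((alphaL α hiso u).hasFDerivAt.comp u h3)
  have hfun : (fun w => alphaL α hiso u (F (w - u))) = F := by
    funext w
    have hw : u + (w - u) = w := by abel
    rw [alphaL_apply, hF]
    simp only
    rw [← hadd, hw]
  rw [hfun] at h4
  rw [ContinuousLinearMap.comp_id] at h4
  exact h4

include hiso hadd in
lemma alpha_pd_eq (a : A) (ha : ContDiff ℝ (⊤ : ℕ∞) fun u => α u a) (i : Fin d) (u : Fin d → ℝ) :
    α u (pd α i a) = fderiv ℝ (fun w => α w a) u (Pi.single i 1) := by
  rw [(alpha_fderiv α hiso hadd a ha u).fderiv]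
  rfl

include hiso hadd in
lemma pd_smooth (a : A) (ha : ContDiff ℝ (⊤ : ℕ∞) fun u => α u a) (i : Fin d) :
    ContDiff ℝ (⊤ : ℕ∞) fun u => α u (pd α i a) := by
  have heq : (fun u => α u (pd α i a))
      = fun u => (ContinuousLinearMap.apply ℝ A (Pi.single i (1:ℝ)))
          (fderiv ℝ (fun w => α w a) u) := by
    funext u
    rw [alpha_pd_eq α hiso hadd a ha i u]
    rfl
  rw [heq]
  exact (ContinuousLinearMap.apply ℝ A (Pi.single i (1:ℝ))).contDiff.comp
    (ha.fderiv_right (m := ((⊤ : ℕ∞) : WithTop ℕ∞)) (by simp))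

include hiso hcont hadd hG in
lemma Sg_smooth (a : A) (ha : ContDiff ℝ (⊤ : ℕ∞) fun u => α u a) :
    ContDiff ℝ (⊤ : ℕ∞) fun u => α u (Sg α G a) := by
  have heq : (fun u => α u (Sg α G a)) = fun u => SgL α hiso hcont G hG (α u a) := by
    funext u
    rw [SgL_apply, alpha_Sg α hiso hcont G hG hadd]
  rw [heq]
  exact (SgL α hiso hcont G hG).contDiff.comp ha

include hiso hcont hadd hG in
lemma pd_Sg (a : A) (ha : ContDiff ℝ (⊤ : ℕ∞) fun u => α u a) (i : Fin d) :
    pd α i (Sg α G a) = Sg α G (pd α i a) := by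
  have heq : (fun u => α u (Sg α G a)) = fun u => SgL α hiso hcont G hG (α u a) := by
    funext u
    rw [SgL_apply, alpha_Sg α hiso hcont G hG hadd]
  have hF : HasFDerivAt (fun u => α u a) (fderiv ℝ (fun u => α u a) 0) 0 :=
    ((ha.differentiable (by simp)) 0).hasFDerivAt
  have hc : HasFDerivAt (fun u => SgL α hiso hcont G hG (α u a))
      ((SgL α hiso hcont G hG).comp (fderiv ℝ (fun u => α u a) 0)) 0 :=
    (SgL α hiso hcont G hG).hasFDerivAt.comp 0 hF
  unfold pd
  rw [heq, hc.fderiv]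
  rfl

end Smooth

section Iter

variable (α : (Fin d → ℝ) → A →ₗ[ℂ] A)
  (hiso : ∀ u (a : A), ‖α u a‖ = ‖a‖)
  (hcont : ∀ a : A, Continuous fun u => α u a)
  (hadd : ∀ u v (a : A), α (u + v) a = α u (α v a))
  (G : Matrix (Fin d) (Fin d) ℝ) (hG : G.PosDef)

include hiso hcont hadd hG in
lemma iter_pd (i : Fin d) (n : ℕ) (a : A) (ha : ContDiff ℝ (⊤ : ℕ∞) fun u => α u a) :
    (ContDiff ℝ (⊤ : ℕ∞) fun u => α u ((pd α i)^[n] a)) ∧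
      (pd α i)^[n] (Sg α G a) = Sg α G ((pd α i)^[n] a) := by
  induction n with
  | zero => exact ⟨ha, rfl⟩
  | succ n ih =>
    obtain ⟨h1, h2⟩ := ih
    constructor
    · rw [Function.iterate_succ_apply']
      exact pd_smooth α hiso hadd _ h1 i
    · rw [Function.iterate_succ_apply', Function.iterate_succ_apply', h2,
        pd_Sg α hiso hcont hadd G hG _ h1]

include hiso hcont hadd hG in
lemma md_list (β : Fin d → ℕ) (l : List (Fin d)) (a : A)
    (ha : ContDiff ℝ (⊤ : ℕ∞) fun u => α u a) :
    (ContDiff ℝ (⊤ : ℕ∞) fun u => α u (l.foldr (fun i f => (pd α i)^[β i] ∘ f) id a)) ∧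
      l.foldr (fun i f => (pd α i)^[β i] ∘ f) id (Sg α G a)
        = Sg α G (l.foldr (fun i f => (pd α i)^[β i] ∘ f) id a) := by
  induction l generalizing a with
  | nil => exact ⟨ha, rfl⟩
  | cons i l ih =>
    obtain ⟨h1, h2⟩ := ih a ha
    simp only [List.foldr_cons, Function.comp_apply]
    obtain ⟨h3, h4⟩ := iter_pd α hiso hcont hadd G hG i (β i)
      (l.foldr (fun i f => (pd α i)^[β i] ∘ f) id a) h1
    exact ⟨h3, by rw [h2, h4]⟩

end Iter

/-- If `a` is a smooth vector, then `S_g(a)` is a smooth vector, `∂^β(S_g(a)) = S_g(∂^β a)`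
for every multi-index `β`, and `‖∂^β(S_g(a))‖ ≤ (π^{d/2}/√(det G)) ‖∂^β a‖`. -/
theorem statement9
    (α : (Fin d → ℝ) → A →ₗ[ℂ] A)
    (hiso : ∀ u (a : A), ‖α u a‖ = ‖a‖)
    (h0 : ∀ a : A, α 0 a = a)
    (hadd : ∀ u v (a : A), α (u + v) a = α u (α v a))
    (hcont : ∀ a : A, Continuous fun u => α u a)
    (G : Matrix (Fin d) (Fin d) ℝ) (hG : G.PosDef)
    (a : A) (ha : ContDiff ℝ (⊤ : ℕ∞) fun u => α u a) :
    (ContDiff ℝ (⊤ : ℕ∞) fun u => α u (Sg α G a)) ∧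
      ∀ β : Fin d → ℕ,
        md α β (Sg α G a) = Sg α G (md α β a) ∧
        ‖md α β (Sg α G a)‖ ≤ Real.pi ^ ((d : ℝ) / 2) / Real.sqrt G.det * ‖md α β a‖ := by
  refine ⟨Sg_smooth α hiso hcont hadd G hG a ha, fun β => ?_⟩
  obtain ⟨h1, h2⟩ := md_list α hiso hcont hadd G hG β (List.finRange d) a ha
  refine ⟨h2, ?_⟩
  rw [show md α β (Sg α G a) = Sg α G (md α β a) from h2]
  exact Sg_norm_le α hiso G hG _

end
end
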